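/- Let k ∈ ℂ and let 𝒢 : ℤ² → ℂ satisfy (Δ_d + k²)𝒢(x) = δ_{x,0} for all x ∈ ℤ². Let R ⊂ ℤ² be a finite region and φ : ∂R → ℂ. Define the difference double layer potential Wφ(x) = Σ_{y∈∂R} [ Σ_{j : y−e_j ∈ R̊} ( 𝒢(x−y) − 𝒢(x−y+e_j) ) + δ_{x,y} ] · φ(y) for x ∈ ℤ². Then (Δ_d + k²)(Wφ)(x) = 0 for every x ∈ R̊. -/
import Mathlib


open Finset

/-- The six neighbour directions `e₁, e₂, e₃ = e₁ − e₂, e₄ = −e₁, e₅ = −e₂, e₆ = −e₃`. -/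
def dir : Fin 6 → ℤ × ℤ := ![(1, 0), (0, 1), (1, -1), (-1, 0), (0, -1), (-1, 1)]

/-- The 7-point discrete Laplacian of the triangular lattice on `ℤ²`:
`Δ_d u(x) = Σ_{j=1}^{6} u(x + e_j) − 6u(x)`. -/
noncomputable def discreteLaplacian (u : ℤ × ℤ → ℂ) (x : ℤ × ℤ) : ℂ :=
  (∑ j : Fin 6, u (x + dir j)) - 6 * u x

/-- The difference double layer potential `W` satisfies the discrete Helmholtz
equation at every interior point of the region. -/
theorem double_layer_potential_helmholtz
    (k : ℂ) (G : ℤ × ℤ → ℂ)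
    (hG : ∀ x : ℤ × ℤ, discreteLaplacian G x + k ^ 2 * G x = if x = (0, 0) then 1 else 0)
    (Rint Rbd : Finset (ℤ × ℤ))
    (hdisj : Disjoint Rint Rbd)
    (hRint : Rint.Nonempty) (hRbd : Rbd.Nonempty)
    (hinterior : ∀ x ∈ Rint, ∀ j : Fin 6, x + dir j ∈ Rint ∪ Rbd)
    (hboundary : ∀ y ∈ Rbd, ∃ j : Fin 6, y - dir j ∈ Rint)
    (φ : ℤ × ℤ → ℂ) (W : ℤ × ℤ → ℂ)
    (hW : ∀ x : ℤ × ℤ, W x =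
      ∑ y ∈ Rbd,
        ((∑ j ∈ Finset.univ.filter (fun j : Fin 6 => y - dir j ∈ Rint),
            (G (x - y) - G (x - y + dir j))) + (if x = y then 1 else 0)) * φ y) :
    ∀ x ∈ Rint, discreteLaplacian W x + k ^ 2 * W x = 0 := by
  intro x hx
  have key : ∀ z : ℤ × ℤ, ∑ i : Fin 6, G (z + dir i)
      = (if z = (0, 0) then (1:ℂ) else 0) + (6 - k ^ 2) * G z := by
    intro z
    have h := hG z
    unfold discreteLaplacian at h
    linear_combination h
  simp only [discreteLaplacian, hW]
  rw [Finset.sum_comm, Finset.mul_sum, Finset.mul_sum, ← Finset.sum_sub_distrib,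
    ← Finset.sum_add_distrib]
  apply Finset.sum_eq_zero
  intro y hy
  have hxney : x ≠ y := fun h => (Finset.disjoint_left.mp hdisj hx) (h ▸ hy)
  rw [← Finset.sum_mul]
  have main :
      (∑ i : Fin 6,
        ((∑ j ∈ Finset.univ.filter (fun j : Fin 6 => y - dir j ∈ Rint),
            (G (x + dir i - y) - G (x + dir i - y + dir j)))
          + (if x + dir i = y then (1:ℂ) else 0)))
      + (k ^ 2 - 6) *
        ((∑ j ∈ Finset.univ.filter (fun j : Fin 6 => y - dir j ∈ Rint),
            (G (x - y) - G (x - y + dir j))) + (if x = y then (1:ℂ) else 0)) = 0 := by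
    have inner : ∀ j : Fin 6,
        (∑ i : Fin 6, (G (x + dir i - y) - G (x + dir i - y + dir j)))
        = ((if x = y then (1:ℂ) else 0) - (if x = y - dir j then (1:ℂ) else 0))
          + (6 - k ^ 2) * (G (x - y) - G (x - y + dir j)) := by
      intro j
      rw [Finset.sum_sub_distrib]
      have h1 : ∑ i : Fin 6, G (x + dir i - y) = ∑ i : Fin 6, G ((x - y) + dir i) :=
        Finset.sum_congr rfl fun i _ => congrArg G (by ring)
      have h2 : ∑ i : Fin 6, G (x + dir i - y + dir j)
          = ∑ i : Fin 6, G ((x - y + dir j) + dir i) :=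
        Finset.sum_congr rfl fun i _ => congrArg G (by ring)
      rw [h1, h2, key, key]
      have c1 : (x - y = ((0, 0) : ℤ × ℤ)) ↔ x = y := by
        rw [show ((0, 0) : ℤ × ℤ) = 0 from rfl, sub_eq_zero]
      have c2 : (x - y + dir j = ((0, 0) : ℤ × ℤ)) ↔ x = y - dir j := by
        rw [show x - y + dir j = x - (y - dir j) by ring,
          show ((0, 0) : ℤ × ℤ) = 0 from rfl, sub_eq_zero]
      rw [if_congr c1 rfl rfl, if_congr c2 rfl rfl]
      ring
    rw [Finset.sum_add_distrib, Finset.sum_comm]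
    simp only [inner, if_neg hxney]
    have cancel :
        (∑ j ∈ Finset.univ.filter (fun j : Fin 6 => y - dir j ∈ Rint),
          (if x = y - dir j then (1:ℂ) else 0))
        = ∑ i : Fin 6, (if x + dir i = y then (1:ℂ) else 0) := by
      rw [Finset.sum_filter]
      apply Finset.sum_congr rfl
      intro j _
      by_cases hxe : x = y - dir j
      · have hmem : y - dir j ∈ Rint := hxe ▸ hx
        have : x + dir j = y := by rw [hxe]; ring
        simp [hmem, hxe, this]
      · have hne : x + dir j ≠ y := fun h => hxe (by rw [← h]; ring)
        simp [hxe, hne]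
    rw [Finset.sum_add_distrib, Finset.sum_sub_distrib, Finset.sum_const_zero,
      ← Finset.mul_sum, cancel]
    ring
  linear_combination main * φ y
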